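/- For any halfspace f = 1{∑ a_i x_i > t} on {-1,1}^n with 0 < E[f] ≤ 1/2, the degree-1 Fourier weight satisfies W¹(f) ≤ 2·E[f]²·log(1/E[f]). -/
import Mathlib

open Finset

noncomputable section
open scoped Classical

/-- The ±1 value associated to a Boolean bit. -/
def sgn1 (b : Bool) : ℝ := if b then 1 else -1

/-- Probability of an event under the uniform measure on `{-1,1}^n`. -/
def cubePr (n : ℕ) (P : (Fin n → Bool) → Prop) : ℝ :=
  ((univ.filter P).card : ℝ) / 2 ^ n

/-- Expectation of a function under the uniform measure on `{-1,1}^n`. -/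
def cubeE (n : ℕ) (f : (Fin n → Bool) → ℝ) : ℝ := (∑ x, f x) / 2 ^ n

/-- The linear form `a · x = ∑ aᵢ xᵢ` on `{-1,1}^n`. -/
def lin (n : ℕ) (a : Fin n → ℝ) (x : Fin n → Bool) : ℝ := ∑ i, a i * sgn1 (x i)

/-- The halfspace `1{a · x > t}` as a 0/1-valued function. -/
def halfspace (n : ℕ) (a : Fin n → ℝ) (t : ℝ) (x : Fin n → Bool) : ℝ :=
  if t < lin n a x then 1 else 0

/-- The influence of coordinate `i` on `f`: the probability that flipping
coordinate `i` changes the value of `f`. -/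
def infl (n : ℕ) (i : Fin n) (f : (Fin n → Bool) → ℝ) : ℝ :=
  cubePr n (fun x => f x ≠ f (Function.update x i (!x i)))

/-- The degree-1 Fourier coefficient `f̂({i}) = E[f(x)·xᵢ]`. -/
def fCoeff (n : ℕ) (f : (Fin n → Bool) → ℝ) (i : Fin n) : ℝ :=
  cubeE n (fun x => f x * sgn1 (x i))

/-- The degree-1 Fourier weight `W¹(f) = ∑ᵢ f̂({i})²`. -/
def W1 (n : ℕ) (f : (Fin n → Bool) → ℝ) : ℝ := ∑ i, (fCoeff n f i) ^ 2

/-- Jensen's inequality for `exp` with finitely many weights. -/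
lemma jensen_exp {ι : Type*} [Fintype ι] (w g : ι → ℝ) (hw : ∀ i, 0 ≤ w i)
    (h1 : ∑ i, w i = 1) :
    Real.exp (∑ i, w i * g i) ≤ ∑ i, w i * Real.exp (g i) := by
  have := convexOn_exp.map_sum_le (t := Finset.univ) (w := w) (p := g)
    (fun i _ => hw i) h1 (fun i _ => Set.mem_univ _)
  simpa [smul_eq_mul] using this

/-- Hoeffding-type bound on the moment generating function of a Rademacher sum. -/
lemma mgf_bound (n : ℕ) (d : Fin n → ℝ) :
    ∑ x : Fin n → Bool, Real.exp (∑ i, d i * sgn1 (x i)) ≤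
      2 ^ n * Real.exp (∑ i, d i ^ 2 / 2) := by
  calc ∑ x : Fin n → Bool, Real.exp (∑ i, d i * sgn1 (x i))
      = ∑ x : Fin n → Bool, ∏ i, Real.exp (d i * sgn1 (x i)) := by
        simp [Real.exp_sum]
    _ = ∏ i, ∑ b : Bool, Real.exp (d i * sgn1 b) := by
        rw [Finset.prod_univ_sum]
        refine Finset.sum_congr ?_ fun _ _ => rfl
        exact Fintype.piFinset_univ.symm
    _ ≤ ∏ i, 2 * Real.exp (d i ^ 2 / 2) := by
        refine Finset.prod_le_prod (fun i _ => Finset.sum_nonneg fun b _ => (Real.exp_pos _).le)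
          (fun i _ => ?_)
        have h := Real.cosh_le_exp_half_sq (d i)
        rw [Real.cosh_eq] at h
        have : Real.exp (d i) + Real.exp (-d i) ≤ 2 * Real.exp (d i ^ 2 / 2) := by linarith
        simpa [sgn1, Fintype.sum_bool, mul_comm, add_comm] using this
    _ = 2 ^ n * Real.exp (∑ i, d i ^ 2 / 2) := by
        rw [Finset.prod_mul_distrib, ← Real.exp_sum]
        simp


/-- **Level-1 inequality for halfspaces.** Any halfspace `f = 1{∑ aᵢxᵢ > t}` with
`0 < E[f] ≤ 1/2` satisfies `W¹(f) ≤ 2·E[f]²·log(1/E[f])`. -/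
theorem W1_halfspace_upper_bound (n : ℕ) (a : Fin n → ℝ) (t : ℝ)
    (h0 : 0 < cubeE n (halfspace n a t))
    (h2 : cubeE n (halfspace n a t) ≤ 1 / 2) :
    W1 n (halfspace n a t) ≤
      2 * (cubeE n (halfspace n a t)) ^ 2 * Real.log (1 / cubeE n (halfspace n a t)) := by
  set f := halfspace n a t with hfdef
  set α := cubeE n f with hαdef
  set c : Fin n → ℝ := fun i => fCoeff n f i with hcdef
  set S := W1 n f with hSdef
  set L := Real.log (1 / α) with hLdef
  have hN : (0:ℝ) < 2 ^ n := by positivity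
  have hf0 : ∀ x, 0 ≤ f x := by
    intro x; rw [hfdef]; unfold halfspace; split <;> norm_num
  have hf1 : ∀ x, f x ≤ 1 := by
    intro x; rw [hfdef]; unfold halfspace; split <;> norm_num
  have hsum : ∑ x, f x = α * 2 ^ n := by
    rw [hαdef]; unfold cubeE; field_simp
  have hS0 : 0 ≤ S := by
    rw [hSdef]; exact Finset.sum_nonneg fun i _ => sq_nonneg _
  have hL0 : 0 < L := by
    rw [hLdef]; apply Real.log_pos
    rw [lt_div_iff₀ h0]; linarith
  -- Parseval : ∑ₓ f x · ℓ x = 2ⁿ · S, where ℓ x = ∑ᵢ cᵢ · xᵢ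
  have hcoeff : ∀ i, ∑ x : Fin n → Bool, f x * sgn1 (x i) = 2 ^ n * c i := by
    intro i
    have : c i = (∑ x : Fin n → Bool, f x * sgn1 (x i)) / 2 ^ n := rfl
    rw [this]; field_simp
  have hpar : ∑ x : Fin n → Bool, f x * (∑ i, c i * sgn1 (x i)) = 2 ^ n * S := by
    calc ∑ x : Fin n → Bool, f x * (∑ i, c i * sgn1 (x i))
        = ∑ x : Fin n → Bool, ∑ i, c i * (f x * sgn1 (x i)) := by
          refine Finset.sum_congr rfl fun x _ => ?_
          rw [Finset.mul_sum]
          exact Finset.sum_congr rfl fun i _ => by ring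
      _ = ∑ i, c i * ∑ x : Fin n → Bool, f x * sgn1 (x i) := by
          rw [Finset.sum_comm]
          exact Finset.sum_congr rfl fun i _ => (Finset.mul_sum _ _ _).symm
      _ = ∑ i, c i * (2 ^ n * c i) := by
          exact Finset.sum_congr rfl fun i _ => by rw [hcoeff i]
      _ = 2 ^ n * S := by
          rw [hSdef]; unfold W1; rw [Finset.mul_sum]
          exact Finset.sum_congr rfl fun i _ => by rw [hcdef]; ring
  -- the key exponential-moment inequality
  have key : ∀ l : ℝ, l * S / α ≤ l ^ 2 * S / 2 + L := by
    intro l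
    set w : (Fin n → Bool) → ℝ := fun x => f x / (α * 2 ^ n) with hwdef
    have hw0 : ∀ x, 0 ≤ w x := fun x => by
      apply div_nonneg (hf0 x); positivity
    have hw1 : ∑ x, w x = 1 := by
      rw [hwdef]
      rw [← Finset.sum_div, hsum]
      field_simp
    have hj := jensen_exp w (fun x => l * (∑ i, c i * sgn1 (x i))) hw0 hw1
    have hlhs : ∑ x, w x * (l * (∑ i, c i * sgn1 (x i))) = l * S / α := by
      calc ∑ x, w x * (l * (∑ i, c i * sgn1 (x i)))
          = (l / (α * 2 ^ n)) * ∑ x : Fin n → Bool, f x * (∑ i, c i * sgn1 (x i)) := by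
            rw [Finset.mul_sum]
            exact Finset.sum_congr rfl fun x _ => by rw [hwdef]; ring
        _ = l * S / α := by
            rw [hpar]; field_simp
    have hrhs : ∑ x, w x * Real.exp (l * (∑ i, c i * sgn1 (x i))) ≤
        Real.exp (l ^ 2 * S / 2) / α := by
      have step1 : ∑ x, w x * Real.exp (l * (∑ i, c i * sgn1 (x i))) ≤
          (1 / (α * 2 ^ n)) * ∑ x : Fin n → Bool, Real.exp (∑ i, (l * c i) * sgn1 (x i)) := by
        rw [Finset.mul_sum]
        refine Finset.sum_le_sum fun x _ => ?_
        have he : l * (∑ i, c i * sgn1 (x i)) = ∑ i, (l * c i) * sgn1 (x i) := by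
          rw [Finset.mul_sum]
          exact Finset.sum_congr rfl fun i _ => by ring
        rw [he]
        have hα2 : 0 < α * 2 ^ n := by positivity
        have hwx : w x ≤ 1 / (α * 2 ^ n) := by
          show f x / (α * 2 ^ n) ≤ 1 / (α * 2 ^ n)
          gcongr
          exact hf1 x
        exact mul_le_mul_of_nonneg_right hwx (Real.exp_pos _).le
      have step2 : ∑ x : Fin n → Bool, Real.exp (∑ i, (l * c i) * sgn1 (x i)) ≤
          2 ^ n * Real.exp (l ^ 2 * S / 2) := by
        have := mgf_bound n (fun i => l * c i)
        have hsq : ∑ i, (l * c i) ^ 2 / 2 = l ^ 2 * S / 2 := by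
          have hterm : ∀ i ∈ Finset.univ, (l * c i) ^ 2 / 2 = l ^ 2 / 2 * (fCoeff n f i) ^ 2 :=
            fun i _ => by rw [hcdef]; ring
          rw [Finset.sum_congr rfl hterm, ← Finset.mul_sum, hSdef]
          unfold W1; ring
        rw [hsq] at this
        exact this
      calc ∑ x, w x * Real.exp (l * (∑ i, c i * sgn1 (x i)))
          ≤ (1 / (α * 2 ^ n)) * ∑ x : Fin n → Bool, Real.exp (∑ i, (l * c i) * sgn1 (x i)) :=
            step1
        _ ≤ (1 / (α * 2 ^ n)) * (2 ^ n * Real.exp (l ^ 2 * S / 2)) := by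
            apply mul_le_mul_of_nonneg_left step2 (by positivity)
        _ = Real.exp (l ^ 2 * S / 2) / α := by field_simp
    have hfin : Real.exp (l * S / α) ≤ Real.exp (l ^ 2 * S / 2) / α := by
      rw [hlhs] at hj
      exact hj.trans hrhs
    have hlog := Real.log_le_log (Real.exp_pos _) hfin
    rw [Real.log_exp, Real.log_div (Real.exp_ne_zero _) (ne_of_gt h0), Real.log_exp] at hlog
    have : L = - Real.log α := by rw [hLdef, one_div, Real.log_inv]
    linarith
  -- conclude
  rcases eq_or_lt_of_le hS0 with hSz | hSpos
  · rw [← hSz]; positivity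
  · set l := Real.sqrt (2 * L / S) with hldef
    have hl2 : l ^ 2 = 2 * L / S := Real.sq_sqrt (by positivity)
    have hk := key l
    rw [hl2] at hk
    have hSne : S ≠ 0 := ne_of_gt hSpos
    have hB : 2 * L / S * S / 2 = L := by field_simp
    rw [hB] at hk
    rw [div_le_iff₀ h0] at hk
    have hlS0 : 0 ≤ l * S := mul_nonneg (Real.sqrt_nonneg _) hS0
    have hsq : (l * S) ^ 2 ≤ ((L + L) * α) ^ 2 := by
      apply pow_le_pow_left₀ hlS0 hk
    have hlS2 : (l * S) ^ 2 = 2 * L * S := by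
      rw [mul_pow, hl2]; field_simp
    rw [hlS2] at hsq
    -- 2 L S ≤ 4 L² α² ⟹ S ≤ 2 α² L
    nlinarith [hL0, hSpos, h0]

end
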